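/- arXiv:math/0608500 — 5 statements merged into one kernel-verified Lean document; each statement's English description precedes it below -/
import Mathlib

section
/- Let u be a 2×2 complex matrix with det u = 1. Then for every n ≥ 1, p₁(u) · p_n(u) = p_{n−1}(u) + p_{n+1}(u), where p_n(u) is the trace of the endomorphism induced by u on the space of homogeneous polynomials of degree n in two variables (the character of the n-th symmetric power representation Sym^n(ℂ²)); moreover p₁(u) = trace(u). This is the Clebsch–Gordan relation π₁ ⊗ π_n ≅ π_{n−1} ⊕ π_{n+1} at the level of characters. -/
/-!
Both sides are invariant under conjugation of `u`, so we may assume `u` upper triangular with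
diagonal entries `a`, `d`, where `a * d = det u = 1`. In the monomial basis `x₀ᵏ x₁ᵐ` of the degree
`n` component the substitution is then triangular with diagonal entries `aᵏ dᵐ`, so `p_n(u)` is
the complete homogeneous symmetric polynomial `h_n(a, d)`, and the relation becomes the recurrence
`(a + d) h_n = h_{n+1} + a d h_{n-1}`, which follows from `h_{n+1} = d^{n+1} + a h_n`.
-/

open MvPolynomial

/-- The algebra endomorphism of `ℂ[x₁,x₂]` induced by a `2 × 2` matrix `u`,
sending the variable `X i` to `∑ j, u j i • X j`. -/
noncomputable def matrixSubst (u : Matrix (Fin 2) (Fin 2) ℂ) :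
    MvPolynomial (Fin 2) ℂ →ₐ[ℂ] MvPolynomial (Fin 2) ℂ :=
  aeval fun i => ∑ j, u j i • X j

/-- `matrixSubst u` preserves the homogeneous component of degree `n`. -/
theorem matrixSubst_mem (u : Matrix (Fin 2) (Fin 2) ℂ) (n : ℕ) :
    ∀ x ∈ homogeneousSubmodule (Fin 2) ℂ n,
      matrixSubst u x ∈ homogeneousSubmodule (Fin 2) ℂ n := by
  intro x hx
  rw [← support_sum_monomial_coeff x, map_sum]
  apply Submodule.sum_mem
  intro d hd
  have hdeg : d.degree = n := by
    rw [Finsupp.degree_eq_weight_one]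
    exact hx (mem_support_iff.mp hd)
  rw [mem_homogeneousSubmodule, matrixSubst, aeval_monomial, algebraMap_eq]
  apply MvPolynomial.IsHomogeneous.C_mul
  rw [Finsupp.prod]
  have : n = ∑ i ∈ d.support, d i := by
    rw [← hdeg]; rfl
  rw [this]
  apply MvPolynomial.IsHomogeneous.prod
  intro i _
  have hL : ((∑ j, u j i • X j : MvPolynomial (Fin 2) ℂ)).IsHomogeneous 1 := by
    apply MvPolynomial.IsHomogeneous.sum
    intro j _
    rw [smul_eq_C_mul]
    exact isHomogeneous_C_mul_X _ _
  simpa using hL.pow (d i)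

/-- `p n u` : the trace of the endomorphism induced by `u` on the space of homogeneous
polynomials of degree `n` in two variables (the character of `Symⁿ(ℂ²)`). -/
noncomputable def symCharacter (n : ℕ) (u : Matrix (Fin 2) (Fin 2) ℂ) : ℂ :=
  LinearMap.trace ℂ (homogeneousSubmodule (Fin 2) ℂ n)
    ((matrixSubst u).toLinearMap.restrict (matrixSubst_mem u n))

open Finset

section MonomialTrace

variable {σ K : Type*} [Field K]

theorem trace_restrict_homogeneousSubmodule (f : MvPolynomial σ K →ₗ[K] MvPolynomial σ K)
    {n : ℕ} (hf : ∀ p ∈ homogeneousSubmodule σ K n, f p ∈ homogeneousSubmodule σ K n)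
    (S : Finset (σ →₀ ℕ)) (hS : ∀ d, d ∈ S ↔ d.degree = n) :
    LinearMap.trace K _ (f.restrict hf) = ∑ d ∈ S, coeff d (f (monomial d 1)) := by
  have hsub : homogeneousSubmodule σ K n = restrictSupport K (S : Set (σ →₀ ℕ)) := by
    rw [homogeneousSubmodule_eq_finsupp_supported]
    congr
    ext d
    simp [hS]
  let b := (basisRestrictSupport K (S : Set (σ →₀ ℕ))).map (LinearEquiv.ofEq _ _ hsub.symm)
  have hb : ∀ d, (b d : MvPolynomial σ K) = monomial (d : σ →₀ ℕ) 1 := by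
    intro d
    show ((AddMonoidAlgebra.supportedEquivFinsupp (R := K) (S := K) (S : Set (σ →₀ ℕ))).symm
      (Finsupp.single d 1) : MvPolynomial σ K) = _
    simp only [AddMonoidAlgebra.supportedEquivFinsupp, LinearEquiv.trans_symm,
      LinearEquiv.trans_apply, LinearEquiv.symm_mk, LinearEquiv.coe_mk, LinearMap.coe_mk,
      AddHom.coe_mk, Finsupp.supportedEquivFinsupp_symm_single]
    rfl
  have hrepr : ∀ x d, b.repr x d = coeff (d : σ →₀ ℕ) (x : MvPolynomial σ K) := fun _ _ => rfl
  classical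
  rw [LinearMap.trace_eq_matrix_trace K b, Matrix.trace, ← Finset.sum_coe_sort S]
  refine Finset.sum_congr rfl fun d _ => ?_
  rw [Matrix.diag_apply, LinearMap.toMatrix_apply, hrepr, LinearMap.coe_restrict_apply, hb]

end MonomialTrace

theorem coeff_single_pow_smul_X_add_smul_X {σ R : Type*} [CommSemiring R] {i j : σ}
    (hij : i ≠ j) (a b : R) (m : ℕ) :
    coeff (Finsupp.single j m) ((a • X i + b • X j : MvPolynomial σ R) ^ m) = b ^ m := by
  classical
  induction m with
  | zero => simp
  | succ m ih =>
    rw [pow_succ, mul_add, coeff_add, mul_smul_comm, mul_smul_comm, coeff_smul, coeff_smul,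
      coeff_mul_X', if_neg (by simp [hij]), Finsupp.single_add, coeff_mul_X, ih]
    simp [pow_succ, mul_comm]

theorem sum_antidiagonal_succ_pow_mul_pow {R : Type*} [CommSemiring R] (a d : R) (n : ℕ) :
    ∑ p ∈ antidiagonal (n + 1), a ^ p.1 * d ^ p.2 =
      d ^ (n + 1) + a * ∑ p ∈ antidiagonal n, a ^ p.1 * d ^ p.2 := by
  rw [Nat.sum_antidiagonal_succ, mul_sum]
  simp only [pow_zero, one_mul, pow_succ, mul_assoc, mul_comm a]

theorem add_mul_sum_antidiagonal_pow_mul_pow {R : Type*} [CommSemiring R] (a d : R) (m : ℕ) :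
    (a + d) * ∑ p ∈ antidiagonal (m + 1), a ^ p.1 * d ^ p.2 =
      ∑ p ∈ antidiagonal (m + 2), a ^ p.1 * d ^ p.2 +
        a * d * ∑ p ∈ antidiagonal m, a ^ p.1 * d ^ p.2 := by
  rw [sum_antidiagonal_succ_pow_mul_pow a d (m + 1), sum_antidiagonal_succ_pow_mul_pow a d m]
  ring

theorem Matrix.exists_triangularize_fin_two {K : Type*} [Field K] [IsAlgClosed K]
    (u : Matrix (Fin 2) (Fin 2) K) :
    ∃ g h : Matrix (Fin 2) (Fin 2) K, g * h = 1 ∧ (h * u * g) 1 0 = 0 := by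
  by_cases hc : u 1 0 = 0
  · exact ⟨1, 1, by simp, by simpa using hc⟩
  obtain ⟨x, hx⟩ := IsAlgClosed.exists_root
    (Polynomial.C (u 1 0) * Polynomial.X ^ 2 + Polynomial.C (u 1 1 - u 0 0) * Polynomial.X +
      Polynomial.C (-u 0 1)) (by rw [Polynomial.degree_quadratic hc]; norm_num)
  refine ⟨!![x, 1; 1, 0], !![0, 1; 1, -x], ?_, ?_⟩
  · ext i j
    fin_cases i <;> fin_cases j <;> simp [Matrix.mul_apply]
  · simp only [Polynomial.IsRoot.def, Polynomial.eval_add, Polynomial.eval_mul, Polynomial.eval_C,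
      Polynomial.eval_pow, Polynomial.eval_X] at hx
    simp only [Matrix.mul_apply, Fin.sum_univ_two, Matrix.of_apply, Matrix.cons_val',
      Matrix.cons_val_zero, Matrix.cons_val_one, Matrix.cons_val_fin_one]
    linear_combination -hx

section SymCharacter

variable (u v : Matrix (Fin 2) (Fin 2) ℂ)

@[simp]
theorem matrixSubst_X (i : Fin 2) : matrixSubst u (X i) = ∑ j, u j i • X j := by
  simp [matrixSubst]

theorem matrixSubst_mul : matrixSubst (u * v) = (matrixSubst u).comp (matrixSubst v) := by
  refine MvPolynomial.algHom_ext fun i => ?_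
  simp only [AlgHom.comp_apply, matrixSubst_X, Matrix.mul_apply, Fin.sum_univ_two, map_add,
    map_smul]
  module

theorem symCharacter_mul_comm (n : ℕ) : symCharacter n (u * v) = symCharacter n (v * u) := by
  have key : ∀ u v, (matrixSubst (u * v)).toLinearMap.restrict (matrixSubst_mem (u * v) n) =
      (matrixSubst u).toLinearMap.restrict (matrixSubst_mem u n) *
        (matrixSubst v).toLinearMap.restrict (matrixSubst_mem v n) := by
    intro u v
    refine LinearMap.ext fun x => Subtype.ext ?_
    exact DFunLike.congr_fun (matrixSubst_mul u v) x.1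
  rw [symCharacter, symCharacter, key, key, LinearMap.trace_mul_comm]

theorem symCharacter_conj {g h : Matrix (Fin 2) (Fin 2) ℂ} (hgh : g * h = 1) (n : ℕ) :
    symCharacter n (h * u * g) = symCharacter n u := by
  rw [symCharacter_mul_comm, ← mul_assoc, hgh, one_mul]

theorem coeff_matrixSubst_monomial_of_apply_one_zero (hv : v 1 0 = 0) (k m : ℕ) :
    coeff (Finsupp.single 0 k + Finsupp.single 1 m)
      (matrixSubst v (monomial (Finsupp.single 0 k + Finsupp.single 1 m) 1)) =
      v 0 0 ^ k * v 1 1 ^ m := by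
  rw [← one_mul (1 : ℂ), ← monomial_mul, ← X_pow_eq_monomial, ← X_pow_eq_monomial, map_mul,
    map_pow, map_pow, matrixSubst_X, matrixSubst_X, Fin.sum_univ_two, Fin.sum_univ_two, hv,
    zero_smul, add_zero, smul_pow, smul_mul_assoc, coeff_smul, X_pow_eq_monomial,
    coeff_monomial_mul, one_mul, coeff_single_pow_smul_X_add_smul_X (by decide), smul_eq_mul]

theorem symCharacter_eq_sum_antidiagonal_of_apply_one_zero (hv : v 1 0 = 0) (n : ℕ) :
    symCharacter n v = ∑ p ∈ antidiagonal n, v 0 0 ^ p.1 * v 1 1 ^ p.2 := by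
  let e : (Fin 2 →₀ ℕ) ≃ ℕ × ℕ := Finsupp.equivFunOnFinite.trans (finTwoArrowEquiv ℕ)
  have hS (d : Fin 2 →₀ ℕ) : d ∈ (antidiagonal n).map e.symm.toEmbedding ↔ d.degree = n := by
    rw [mem_map_equiv]
    simp [e, Finsupp.degree_eq_sum, Fin.sum_univ_two]
  have he (p : ℕ × ℕ) : e.symm p = Finsupp.single 0 p.1 + Finsupp.single 1 p.2 := by
    ext i
    fin_cases i <;> simp [e]
  refine (trace_restrict_homogeneousSubmodule (matrixSubst v).toLinearMap (matrixSubst_mem v n) _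
    hS).trans ?_
  rw [sum_map]
  refine sum_congr rfl fun p _ => ?_
  rw [Equiv.coe_toEmbedding, he]
  exact coeff_matrixSubst_monomial_of_apply_one_zero v hv p.1 p.2

end SymCharacter

/-- The Clebsch–Gordan relation `π₁ ⊗ πₙ ≅ π_{n-1} ⊕ π_{n+1}` at the level of characters:
for `u ∈ SL(2,ℂ)`, `p₁(u) ⬝ pₙ(u) = p_{n-1}(u) + p_{n+1}(u)`, where moreover
`p₁(u) = trace u`. -/
theorem clebsch_gordan_characters (u : Matrix (Fin 2) (Fin 2) ℂ) (hu : u.det = 1)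
    (n : ℕ) (hn : 1 ≤ n) :
    symCharacter 1 u * symCharacter n u = symCharacter (n - 1) u + symCharacter (n + 1) u ∧
    symCharacter 1 u = u.trace := by
  obtain ⟨g, h, hgh, hv⟩ := Matrix.exists_triangularize_fin_two u
  set v := h * u * g
  have hsym (m : ℕ) : symCharacter m u = ∑ p ∈ antidiagonal m, v 0 0 ^ p.1 * v 1 1 ^ p.2 := by
    rw [← symCharacter_conj u hgh, symCharacter_eq_sum_antidiagonal_of_apply_one_zero v hv]
  have hdet : v 0 0 * v 1 1 = 1 := by
    have : v.det = u.det := by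
      have hgh' := congrArg Matrix.det hgh
      rw [Matrix.det_mul, Matrix.det_one] at hgh'
      simp only [v, Matrix.det_mul]
      linear_combination u.det * hgh'
    rwa [Matrix.det_fin_two, hv, mul_zero, sub_zero, hu] at this
  have htrace : v.trace = u.trace := by
    rw [Matrix.trace_mul_comm, ← mul_assoc, hgh, one_mul]
  have h1 : symCharacter 1 u = v 0 0 + v 1 1 := by
    rw [hsym, sum_antidiagonal_succ_pow_mul_pow]
    simp [add_comm]
  obtain ⟨m, rfl⟩ := Nat.exists_eq_add_of_le' hn
  refine ⟨?_, by rw [h1, ← htrace, Matrix.trace_fin_two]⟩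
  rw [h1, hsym, hsym, hsym, add_mul_sum_antidiagonal_pow_mul_pow, hdet, one_mul, add_comm,
    Nat.add_sub_cancel]
end

section
/- Let R be a commutative ring, ι a finite type, B : Matrix ι ι R, and v : ℕ → (ι → R) a sequence of vectors satisfying B.mulVec (v 0) = v 1 and B.mulVec (v n) = v (n−1) + v (n+1) for all n ≥ 1. Define x : ι → R⟦t⟧ by letting the n-th coefficient of x i be (v n) i. Then for every i ∈ ι, in the formal power series ring R⟦t⟧: t · Σ_{j∈ι} B i j • x j = (1 + t²) · x i − (v 0) i, i.e. t·(B x) = (1 + t²)·x − v₀ componentwise. -/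
/-! Comparing coefficients of `t ^ (n + 1)` turns the identity into the recurrence `B v₀ = v₁`,
`B vₙ₊₁ = vₙ + vₙ₊₂`; the constant coefficients agree because `v₀` is subtracted. -/

open PowerSeries Matrix

theorem PowerSeries.X_mul_eq_one_add_X_sq_mul_sub_C {R : Type*} [Ring R] {f g : PowerSeries R}
    (h_zero : coeff 0 g = coeff 1 f) (h_succ : ∀ n, coeff (n + 1) g = coeff n f + coeff (n + 2) f) :
    X * g = (1 + X ^ 2) * f - C (coeff 0 f) := by
  ext (_ | _ | n)
  · simp
  · simp [h_zero, add_mul, coeff_X_pow_mul']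
  · rw [coeff_succ_X_mul, h_succ, map_sub, add_mul, one_mul, map_add, coeff_X_pow_mul', coeff_C,
      if_pos le_add_self, if_neg (n + 1).succ_ne_zero, sub_zero, add_comm]
    rfl

theorem Matrix.coeff_sum_smul {R ι : Type*} [CommRing R] [Fintype ι] (B : Matrix ι ι R)
    (x : ι → PowerSeries R) (i : ι) (n : ℕ) :
    coeff n (∑ j, B i j • x j) = (B *ᵥ fun j ↦ coeff n (x j)) i := by
  simp [map_sum, Matrix.mulVec, dotProduct]

/-- If a sequence of vectors `v : ℕ → (ι → R)` satisfies `B v₀ = v₁` and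
`B vₙ = v_{n-1} + v_{n+1}` for `n ≥ 1`, and `x i ∈ R⟦t⟧` is the power series whose
`n`-th coefficient is `(v n) i`, then `t ⬝ (B x) = (1 + t²) ⬝ x − v₀` componentwise:
`t * ∑ j, B i j • x j = (1 + t²) * x i − C ((v 0) i)`. -/
theorem powerSeries_mckay_recurrence (R : Type*) [CommRing R] (ι : Type*) [Fintype ι]
    (B : Matrix ι ι R) (v : ℕ → ι → R)
    (h0 : B.mulVec (v 0) = v 1)
    (h1 : ∀ n, 1 ≤ n → B.mulVec (v n) = v (n - 1) + v (n + 1))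
    (x : ι → PowerSeries R)
    (hx : ∀ i n, PowerSeries.coeff n (x i) = v n i) :
    ∀ i, (PowerSeries.X : PowerSeries R) * ∑ j, B i j • x j
      = (1 + PowerSeries.X ^ 2) * x i - PowerSeries.C (v 0 i) := by
  intro i
  have h_coeff (n : ℕ) : coeff n (∑ j, B i j • x j) = B.mulVec (v n) i := by
    simp only [Matrix.coeff_sum_smul, hx]
  rw [← hx i 0]
  refine X_mul_eq_one_add_X_sq_mul_sub_C ?_ fun n ↦ ?_
  · rw [h_coeff, h0, hx]
  · rw [h_coeff, h1 (n + 1) n.succ_pos, Pi.add_apply, Nat.add_sub_cancel, hx, hx]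
end

section
/- Let R be a commutative ring, p and q finite types, D : Matrix p q R and F : Matrix q p R. With w₁ = fromBlocks 1 0 (−2F) (−1), w₂ = fromBlocks (−1) (−2D) 0 1, the Coxeter transformation C = w₂ * w₁, and B = fromBlocks 0 (−2D) (−2F) 0, the following identity holds in the polynomial ring R[t]: det(t² • 1 − C) = det((1 + t²) • 1 − t • B), where the matrices are mapped into Matrix (p ⊕ q) (p ⊕ q) R[t] via the constant embedding. (This identifies the characteristic polynomial of the Coxeter transformation evaluated at t² with det((1+t²)I − tB), the key step in the generalized Ebeling theorem.) -/
/-!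
With `d = 2D`, `f = 2F` and `s = t² + 1`, a block computation gives
`t² • 1 - C = [[1, -d], [0, 1]] * [[s, t² d], [f, s]]`, and the first factor has determinant `1`.
Conjugating by `diag(1, t)` moves one factor `t` from the upper right block to the lower left one,
turning `[[s, t² d], [f, s]]` into `[[s, t d], [t f, s]] = (1 + t²) • 1 - t • B`.
Since `t` is only a non-zero-divisor, the determinants agree after cancelling `det diag(1, t) = t^|q|`.
-/

open Matrix

namespace Matrix

variable {S : Type*} [CommRing S] {p q : Type*} [Fintype p] [Fintype q] [DecidableEq p]
  [DecidableEq q]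

theorem det_fromBlocks_smul₁₂_eq_smul₂₁ {t : S} (ht : IsLeftRegular t) (A : Matrix p p S)
    (B : Matrix p q S) (C : Matrix q p S) (D : Matrix q q S) :
    (fromBlocks A (t • B) C D).det = (fromBlocks A B (t • C) D).det := by
  have hconj : fromBlocks 1 0 0 (t • 1) * fromBlocks A (t • B) C D
      = fromBlocks A B (t • C) D * fromBlocks 1 0 0 (t • 1) := by
    simp [fromBlocks_multiply, smul_mul]
  have hdiag : (fromBlocks 1 0 0 (t • 1) : Matrix (p ⊕ q) (p ⊕ q) S).det = t ^ Fintype.card q := by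
    simp [det_fromBlocks_zero₂₁]
  have hdet := congrArg det hconj
  rw [det_mul, det_mul, hdiag, mul_comm _ (t ^ _)] at hdet
  exact ht.pow _ hdet

theorem smul_one_sub_fromBlocks_mul_fromBlocks (x : S) (d : Matrix p q S) (f : Matrix q p S) :
    x • 1 - fromBlocks (-1) (-d) 0 1 * fromBlocks 1 0 (-f) (-1)
      = fromBlocks 1 (-d) 0 1 * fromBlocks ((x + 1) • 1) (x • d) f ((x + 1) • 1) := by
  rw [← fromBlocks_one, fromBlocks_smul, fromBlocks_multiply, fromBlocks_multiply,
    sub_eq_add_neg, fromBlocks_neg, fromBlocks_add]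
  congr 1 <;>
    simp only [Matrix.mul_smul, Matrix.neg_mul, Matrix.mul_neg, Matrix.one_mul, Matrix.mul_one,
      Matrix.zero_mul, Matrix.mul_zero, neg_neg, zero_add] <;>
    module

theorem det_sq_smul_one_sub_coxeter {t : S} (ht : IsLeftRegular t) (d : Matrix p q S)
    (f : Matrix q p S) :
    (t ^ 2 • 1 - fromBlocks (-1) (-d) 0 1 * fromBlocks 1 0 (-f) (-1)).det
      = ((1 + t ^ 2) • 1 - t • fromBlocks 0 (-d) (-f) 0).det := by
  have hmckay : (1 + t ^ 2) • 1 - t • fromBlocks 0 (-d) (-f) 0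
      = fromBlocks ((t ^ 2 + 1) • 1) (t • d) (t • f) ((t ^ 2 + 1) • 1) := by
    rw [← fromBlocks_one, fromBlocks_smul, fromBlocks_smul, sub_eq_add_neg, fromBlocks_neg,
      fromBlocks_add]
    congr 1 <;> simp [add_comm]
  rw [smul_one_sub_fromBlocks_mul_fromBlocks, det_mul, det_fromBlocks_zero₂₁, det_one, det_one,
    one_mul, one_mul, hmckay, ← det_fromBlocks_smul₁₂_eq_smul₂₁ ht, smul_smul, sq]

end Matrix

/-- For the Coxeter transformation `C = w₂ * w₁` and the generalized McKay (adjacency)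
matrix `B` of a bipartite block setup given by `D : Matrix p q R`, `F : Matrix q p R`,
the identity `det(t² • 1 − C) = det((1 + t²) • 1 − t • B)` holds in `R[t]`:
the characteristic polynomial of the Coxeter transformation evaluated at `t²` equals
`det((1 + t²)I − tB)`. -/
theorem charpoly_coxeter_eq_det_mckay (R : Type*) [CommRing R]
    (p q : Type*) [Fintype p] [Fintype q] [DecidableEq p] [DecidableEq q]
    (D : Matrix p q R) (F : Matrix q p R)
    (w₁ w₂ C B : Matrix (p ⊕ q) (p ⊕ q) R)
    (hw₁ : w₁ = Matrix.fromBlocks 1 0 (-(2 • F)) (-1))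
    (hw₂ : w₂ = Matrix.fromBlocks (-1) (-(2 • D)) 0 1)
    (hC : C = w₂ * w₁)
    (hB : B = Matrix.fromBlocks 0 (-(2 • D)) (-(2 • F)) 0) :
    ((Polynomial.X : Polynomial R) ^ 2 • (1 : Matrix (p ⊕ q) (p ⊕ q) (Polynomial R))
        - C.map Polynomial.C).det
      = ((1 + (Polynomial.X : Polynomial R) ^ 2) •
            (1 : Matrix (p ⊕ q) (p ⊕ q) (Polynomial R))
          - (Polynomial.X : Polynomial R) • B.map Polynomial.C).det := by
  subst hw₁ hw₂ hC hB
  simp only [Matrix.map_mul, fromBlocks_map,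
    Matrix.map_neg (⇑(Polynomial.C : R →+* Polynomial R)) (map_neg Polynomial.C),
    Matrix.map_one _ Polynomial.C_0 Polynomial.C_1, Matrix.map_zero _ Polynomial.C_0]
  exact det_sq_smul_one_sub_coxeter Polynomial.isRegular_X.left _ _
end

section
/- Let R be a commutative ring, p and q finite types, D : Matrix p q R and F : Matrix q p R, with w₁ = fromBlocks 1 0 (−2F) (−1), w₂ = fromBlocks (−1) (−2D) 0 1, C = w₂ * w₁, and B = fromBlocks 0 (−2D) (−2F) 0. Then the matrix identity B * (1 − w₂) * w₁ = (1 − w₁) * (1 + C) holds. -/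
/-- In the bipartite block setup with `w₁ = fromBlocks 1 0 (−2F) (−1)`,
`w₂ = fromBlocks (−1) (−2D) 0 1`, Coxeter transformation `C = w₂ * w₁` and adjacency
matrix `B = fromBlocks 0 (−2D) (−2F) 0`, one has `B (1 − w₂) w₁ = (1 − w₁)(1 + C)`. -/
theorem adjacency_even_identity (R : Type*) [CommRing R]
    (p q : Type*) [Fintype p] [Fintype q] [DecidableEq p] [DecidableEq q]
    (D : Matrix p q R) (F : Matrix q p R)
    (w₁ w₂ C B : Matrix (p ⊕ q) (p ⊕ q) R)
    (hw₁ : w₁ = Matrix.fromBlocks 1 0 (-(2 • F)) (-1))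
    (hw₂ : w₂ = Matrix.fromBlocks (-1) (-(2 • D)) 0 1)
    (hC : C = w₂ * w₁)
    (hB : B = Matrix.fromBlocks 0 (-(2 • D)) (-(2 • F)) 0) :
    B * (1 - w₂) * w₁ = (1 - w₁) * (1 + C) := by
  subst hC hw₁ hw₂ hB
  simp only [sub_eq_add_neg, ← Matrix.fromBlocks_one, Matrix.fromBlocks_neg,
    Matrix.fromBlocks_add, Matrix.fromBlocks_smul, Matrix.fromBlocks_multiply]
  rw [Matrix.fromBlocks_inj]
  refine ⟨?_, ?_, ?_, ?_⟩ <;>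
    simp [← Nat.cast_smul_eq_nsmul R, Matrix.smul_mul, Matrix.mul_smul, smul_smul, Matrix.mul_add, Matrix.add_mul, mul_add, add_mul, Matrix.mul_one, Matrix.one_mul,
      Matrix.mul_assoc] <;> module
end

section
/- (Adjacency recurrence for assembling vectors.) Let R be a commutative ring, p and q finite types, D : Matrix p q R, F : Matrix q p R, with w₁, w₂, C = w₂ * w₁ and B as in the bipartite block setup, and let β : p ⊕ q → R be any vector. Define the assembling vectors z : ℕ → (p ⊕ q → R) by z(2n+1) = ((1 − w₁) * C^n).mulVec β and z(2n+2) = ((1 − w₂) * w₁ * C^n).mulVec β for n ≥ 0 (so z_k = τ^{(k−1)}β − τ^{(k)}β for the alternating products of w₁ and w₂). Then for every k ≥ 2: B.mulVec (z k) = z (k−1) + z (k+1). -/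
private lemma keyE {M : Type*} [Ring M] (a b : M) (h1 : a*a = 1) (h2 : b*b = 1) :
    (a + b) * ((1 - b) * a) = (1 - a) + (1 - a) * (b * a) := by
  have h : (a + b) * ((1 - b) * a) = a*a + b*a - a*(b*a) - b*b*a := by noncomm_ring
  rw [h, h1, h2]; noncomm_ring

private lemma keyO {M : Type*} [Ring M] (a b : M) (h1 : a*a = 1) (h2 : b*b = 1) :
    (a + b) * ((1 - a) * (b * a)) = (1 - b) * a + ((1 - b) * a) * (b * a) := by
  have h : (a + b) * ((1 - a) * (b * a))
      = a*(b*a) + b*b*a - a*a*(b*a) - b*a*(b*a) := by noncomm_ring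
  rw [h, h1, h2]; noncomm_ring

/-- Adjacency recurrence for the assembling vectors: with `w₁, w₂, C = w₂ * w₁` and `B`
as in the bipartite block setup, `β` any vector, and assembling vectors
`z_{2n+1} = ((1 − w₁) Cⁿ) β`, `z_{2n+2} = ((1 − w₂) w₁ Cⁿ) β`, one has
`B z_k = z_{k-1} + z_{k+1}` for every `k ≥ 2`. -/
theorem adjacency_assembling_recurrence (R : Type*) [CommRing R]
    (p q : Type*) [Fintype p] [Fintype q] [DecidableEq p] [DecidableEq q]
    (D : Matrix p q R) (F : Matrix q p R)
    (w₁ w₂ C B : Matrix (p ⊕ q) (p ⊕ q) R)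
    (hw₁ : w₁ = Matrix.fromBlocks 1 0 (-(2 • F)) (-1))
    (hw₂ : w₂ = Matrix.fromBlocks (-1) (-(2 • D)) 0 1)
    (hC : C = w₂ * w₁)
    (hB : B = Matrix.fromBlocks 0 (-(2 • D)) (-(2 • F)) 0)
    (β : p ⊕ q → R) (z : ℕ → p ⊕ q → R)
    (hzodd : ∀ n : ℕ, z (2 * n + 1) = ((1 - w₁) * C ^ n).mulVec β)
    (hzeven : ∀ n : ℕ, z (2 * n + 2) = ((1 - w₂) * w₁ * C ^ n).mulVec β) :
    ∀ k, 2 ≤ k → B.mulVec (z k) = z (k - 1) + z (k + 1) := by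
  have hBsum : B = w₁ + w₂ := by
    rw [hB, hw₁, hw₂]
    ext (i|i) (j|j) <;> simp [Matrix.fromBlocks]
  have h1 : w₁ * w₁ = 1 := by
    rw [hw₁, Matrix.fromBlocks_multiply, ← Matrix.fromBlocks_one]
    congr 1 <;> ext i j <;> simp [Matrix.one_apply]
  have h2 : w₂ * w₂ = 1 := by
    rw [hw₂, Matrix.fromBlocks_multiply, ← Matrix.fromBlocks_one]
    congr 1 <;> ext i j <;> simp [Matrix.one_apply]
  intro k hk
  obtain ⟨m, rfl⟩ : ∃ m, k = m + 2 := ⟨k - 2, by omega⟩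
  rcases Nat.even_or_odd m with ⟨n, rfl⟩ | ⟨n, rfl⟩
  · -- k = 2n + 2, even
    have key : B * ((1 - w₂) * w₁) = (1 - w₁) + (1 - w₁) * C := by
      rw [hBsum, hC]; exact keyE w₁ w₂ h1 h2
    have e1 : n + n + 2 = 2 * n + 2 := by ring
    have e2 : n + n + 2 - 1 = 2 * n + 1 := by omega
    have e3 : n + n + 2 + 1 = 2 * (n + 1) + 1 := by ring
    rw [e2, e3, e1, hzeven, hzodd, hzodd, Matrix.mulVec_mulVec, ← Matrix.add_mulVec]
    congr 1
    rw [pow_succ', ← mul_assoc B, key, add_mul, mul_assoc]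
  · -- k = 2n + 3, odd
    have key : B * ((1 - w₁) * C) = (1 - w₂) * w₁ + (1 - w₂) * w₁ * C := by
      rw [hBsum, hC]; exact keyO w₁ w₂ h1 h2
    have e2 : 2 * n + 1 + 2 - 1 = 2 * n + 2 := by omega
    have e3 : 2 * n + 1 + 2 = 2 * (n + 1) + 1 := by ring
    have e4 : 2 * n + 1 + 2 + 1 = 2 * (n + 1) + 2 := by ring
    rw [e2, e4, e3, hzodd, hzeven, hzeven, Matrix.mulVec_mulVec, ← Matrix.add_mulVec]
    congr 1
    rw [pow_succ', ← mul_assoc (1 - w₁), ← mul_assoc B, key, add_mul,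
      mul_assoc ((1 - w₂) * w₁)]
end
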